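/- Let (Ω, ℱ, ℙ) be a probability space, k a positive integer, ε ≥ 0, and θ_0, θ_1, …, θ_k : Ω → ℝⁿ square-integrable random vectors satisfying 𝔼[‖θ_{i+1} − G(θ_i)‖₂²] ≤ ε for all i = 0, 1, …, k−1, where G(θ) := (ΦᵀDΦ)⁻¹ΦᵀD(R + γPΦθ). Then for every i with 0 ≤ i ≤ k, 𝔼[‖θ_i − θ*‖₂²] ≤ ω₁ε + ω₂, where ω₁ := 2(1+γ²)λ_max(ΦᵀDΦ) / ((1−γ²)² λ_min(ΦᵀDΦ)), ω₂ := 𝔼[‖Φθ_0 − Φθ*‖_D²] / λ_min(ΦᵀDΦ), and θ* := −(ΦᵀD(γP − I)Φ)⁻¹ΦᵀDR. -/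

import Mathlib

/-!
`G` is affine with linear part `θ ↦ γ Π P Φ θ`, where `Φ Π` is the `D`-orthogonal projection onto
the column space of `Φ`. The projection, and `P` because `d` is stationary, are nonexpansive in
`‖·‖_D`, so `G` is a `γ`-contraction for `θ ↦ ‖Φθ‖_D`; this also makes `ΦᵀD(γP - I)Φ` invertible
and `θ*` a fixed point of `G`. Splitting `Φ(θ_{i+1} - θ*) = Φ(θ_{i+1} - Gθ_i) + Φ(Gθ_i - Gθ*)` with
`(a + b)² ≤ a²/(1 - t) + b²/t` gives, for `e_i = 𝔼‖Φ(θ_i - θ*)‖_D²`,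
`e_{i+1} ≤ (1 + γ²)/2 · e_i + (1 + γ²)/(1 - γ²) · λ_max ε`, hence
`e_i ≤ e_0 + 2(1 + γ²) λ_max ε / (1 - γ²)²`; finally `λ_min ‖θ‖² ≤ ‖Φθ‖_D²`.
-/

open Matrix MeasureTheory
open scoped MatrixOrder

namespace Matrix

lemma sum_sq_eq_dotProduct_self {κ : Type*} [Fintype κ] (x : κ → ℝ) : ∑ j, x j ^ 2 = x ⬝ᵥ x := by
  simp only [dotProduct, sq]

lemma mulVec_injective_of_rank_eq_card {ι κ K : Type*} [Fintype κ] [Field K] {A : Matrix ι κ K}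
    (hA : A.rank = Fintype.card κ) : Function.Injective A.mulVec := by
  rw [mulVec_injective_iff, linearIndependent_iff_card_eq_finrank_span, Set.finrank,
    ← rank_eq_finrank_span_cols, hA]

end Matrix

namespace Matrix.IsHermitian

variable {κ : Type*} [Fintype κ] [DecidableEq κ] {A : Matrix κ κ ℝ}

lemma iInf_eigenvalues_mul_le (hA : A.IsHermitian) (x : κ → ℝ) :
    (⨅ i, hA.eigenvalues i) * ∑ j, x j ^ 2 ≤ x ⬝ᵥ A *ᵥ x := by
  rw [sum_sq_eq_dotProduct_self]
  have h : algebraMap ℝ _ (⨅ i, hA.eigenvalues i) ≤ A := by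
    refine algebraMap_le_of_le_spectrum (fun r hr => ?_) hA
    obtain ⟨i, rfl⟩ := hA.spectrum_real_eq_range_eigenvalues ▸ hr
    exact ciInf_le (Set.finite_range _).bddBelow i
  have := (Matrix.le_iff.mp h).dotProduct_mulVec_nonneg x
  simpa [sub_mulVec, Algebra.algebraMap_eq_smul_one, smul_mulVec, dotProduct_sub] using this

lemma le_iSup_eigenvalues_mul (hA : A.IsHermitian) (x : κ → ℝ) :
    x ⬝ᵥ A *ᵥ x ≤ (⨆ i, hA.eigenvalues i) * ∑ j, x j ^ 2 := by
  rw [sum_sq_eq_dotProduct_self]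
  have h : A ≤ algebraMap ℝ _ (⨆ i, hA.eigenvalues i) := by
    refine le_algebraMap_of_spectrum_le (fun r hr => ?_) hA
    obtain ⟨i, rfl⟩ := hA.spectrum_real_eq_range_eigenvalues ▸ hr
    exact le_ciSup (Set.finite_range _).bddAbove i
  have := (Matrix.le_iff.mp h).dotProduct_mulVec_nonneg x
  simpa [sub_mulVec, Algebra.algebraMap_eq_smul_one, smul_mulVec, dotProduct_sub] using this

end Matrix.IsHermitian

lemma Matrix.PosDef.iInf_eigenvalues_pos {κ : Type*} [Fintype κ] [DecidableEq κ] [Nonempty κ]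
    {A : Matrix κ κ ℝ} (hA : A.PosDef) : 0 < ⨅ i, hA.isHermitian.eigenvalues i := by
  obtain ⟨i₀, hi₀⟩ := Finite.exists_min hA.isHermitian.eigenvalues
  exact (hA.eigenvalues_pos i₀).trans_le (le_ciInf hi₀)

namespace PeriodicTD

section WeightedSqNorm

variable {ι : Type*} [Fintype ι] {d : ι → ℝ}

/-- `‖v‖_D²` for `D = diagonal d`. -/
def weightedSqNorm (d v : ι → ℝ) : ℝ := ∑ s, d s * v s ^ 2

lemma weightedSqNorm_nonneg (hd : ∀ s, 0 ≤ d s) (v : ι → ℝ) : 0 ≤ weightedSqNorm d v :=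
  Finset.sum_nonneg fun s _ => mul_nonneg (hd s) (sq_nonneg _)

lemma weightedSqNorm_smul (c : ℝ) (v : ι → ℝ) :
    weightedSqNorm d (c • v) = c ^ 2 * weightedSqNorm d v := by
  simp only [weightedSqNorm, Finset.mul_sum, Pi.smul_apply, smul_eq_mul]
  exact Finset.sum_congr rfl fun s _ => by ring

lemma dotProduct_diagonal_mulVec_self [DecidableEq ι] (v : ι → ℝ) :
    v ⬝ᵥ diagonal d *ᵥ v = weightedSqNorm d v := by
  simp only [dotProduct, mulVec_diagonal, weightedSqNorm]
  exact Finset.sum_congr rfl fun s _ => by ring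

lemma weightedSqNorm_add [DecidableEq ι] (a b : ι → ℝ) :
    weightedSqNorm d (a + b) =
      weightedSqNorm d a + 2 * (a ⬝ᵥ diagonal d *ᵥ b) + weightedSqNorm d b := by
  simp only [weightedSqNorm, dotProduct, mulVec_diagonal, Finset.mul_sum,
    ← Finset.sum_add_distrib, Pi.add_apply]
  exact Finset.sum_congr rfl fun s _ => by ring

lemma weightedSqNorm_add_le (hd : ∀ s, 0 ≤ d s) {t : ℝ} (ht0 : 0 < t) (ht1 : t < 1)
    (a b : ι → ℝ) :
    weightedSqNorm d (a + b) ≤ weightedSqNorm d a / (1 - t) + weightedSqNorm d b / t := by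
  simp only [weightedSqNorm, Finset.sum_div, ← Finset.sum_add_distrib, Pi.add_apply]
  refine Finset.sum_le_sum fun s _ => ?_
  have key : (a s + b s) ^ 2 ≤ a s ^ 2 / (1 - t) + b s ^ 2 / t := by
    rw [div_add_div _ _ (by linarith) ht0.ne', le_div_iff₀ (by nlinarith)]
    nlinarith [sq_nonneg (t * a s - (1 - t) * b s)]
  calc d s * (a s + b s) ^ 2 ≤ d s * (a s ^ 2 / (1 - t) + b s ^ 2 / t) :=
        mul_le_mul_of_nonneg_left key (hd s)
    _ = _ := by ring

lemma weightedSqNorm_mulVec_le_of_stationary [DecidableEq ι] {P : Matrix ι ι ℝ}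
    (hP : P ∈ rowStochastic ℝ ι) (hd : ∀ s, 0 ≤ d s) (hstat : vecMul d P = d) (z : ι → ℝ) :
    weightedSqNorm d (P *ᵥ z) ≤ weightedSqNorm d z := by
  have hrow : ∀ s, (P *ᵥ z) s ^ 2 ≤ ∑ t, P s t * z t ^ 2 := fun s => by
    have hPs : ∀ t, 0 ≤ P s t := fun t => nonneg_of_mem_rowStochastic hP
    simpa [mulVec, dotProduct, sum_row_of_mem_rowStochastic hP s] using
      Finset.sum_sq_le_sum_mul_sum_of_sq_le_mul Finset.univ (r := fun t => P s t * z t)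
        (fun t _ => hPs t) (fun t _ => mul_nonneg (hPs t) (sq_nonneg (z t)))
        (fun t _ => (by ring : _ = _).le)
  calc weightedSqNorm d (P *ᵥ z) ≤ ∑ s, d s * ∑ t, P s t * z t ^ 2 :=
        Finset.sum_le_sum fun s _ => mul_le_mul_of_nonneg_left (hrow s) (hd s)
    _ = ∑ t, vecMul d P t * z t ^ 2 := by
        simp only [vecMul, dotProduct, Finset.mul_sum, Finset.sum_mul]
        rw [Finset.sum_comm]
        exact Finset.sum_congr rfl fun t _ => Finset.sum_congr rfl fun s _ => by ring
    _ = weightedSqNorm d z := by rw [hstat]; rfl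

end WeightedSqNorm

section Gram

variable {ι κ : Type*} [Fintype ι] [Fintype κ] [DecidableEq ι] (d : ι → ℝ) (Φ : Matrix ι κ ℝ)

lemma dotProduct_gram_mulVec (x : κ → ℝ) :
    x ⬝ᵥ (Φᵀ * diagonal d * Φ) *ᵥ x = weightedSqNorm d (Φ *ᵥ x) := by
  rw [← mulVec_mulVec, ← mulVec_mulVec, dotProduct_mulVec, vecMul_transpose,
    dotProduct_diagonal_mulVec_self]

lemma posSemidef_gram (hd : ∀ s, 0 ≤ d s) : (Φᵀ * diagonal d * Φ).PosSemidef := by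
  simpa using (posSemidef_diagonal_iff.2 hd).conjTranspose_mul_mul_same Φ

lemma posDef_gram (hd : ∀ s, 0 < d s) (hΦ : Function.Injective Φ.mulVec) :
    (Φᵀ * diagonal d * Φ).PosDef := by
  simpa using (posDef_diagonal_iff.2 hd).conjTranspose_mul_mul_same hΦ

variable [DecidableEq κ]

/-- `projCoef d Φ *ᵥ z` are the coordinates of the `D`-orthogonal projection of `z` onto the
column space of `Φ`. -/
noncomputable def projCoef : Matrix κ ι ℝ := (Φᵀ * diagonal d * Φ)⁻¹ * (Φᵀ * diagonal d)

lemma gram_mul_projCoef (hM : IsUnit (Φᵀ * diagonal d * Φ).det) :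
    Φᵀ * diagonal d * Φ * projCoef d Φ = Φᵀ * diagonal d := by
  rw [projCoef, ← Matrix.mul_assoc, mul_nonsing_inv _ hM, Matrix.one_mul]

lemma weightedSqNorm_mulVec_projCoef_le (hd : ∀ s, 0 ≤ d s)
    (hM : IsUnit (Φᵀ * diagonal d * Φ).det) (z : ι → ℝ) :
    weightedSqNorm d (Φ *ᵥ projCoef d Φ *ᵥ z) ≤ weightedSqNorm d z := by
  set u := projCoef d Φ *ᵥ z
  have horth : (Φ *ᵥ u) ⬝ᵥ diagonal d *ᵥ (z - Φ *ᵥ u) = 0 := by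
    rw [dotProduct_comm, ← dotProduct_transpose_mulVec, mulVec_mulVec, mulVec_sub, mulVec_mulVec,
      mulVec_mulVec, gram_mul_projCoef d Φ hM, sub_self, dotProduct_zero]
  have hsplit := weightedSqNorm_add (d := d) (Φ *ᵥ u) (z - Φ *ᵥ u)
  rw [add_sub_cancel, horth] at hsplit
  linarith [weightedSqNorm_nonneg hd (z - Φ *ᵥ u)]

end Gram

section ProjectedBellman

variable {ι κ : Type*} [Fintype ι] [Fintype κ] [DecidableEq ι] [DecidableEq κ]
  (P : Matrix ι ι ℝ) (d : ι → ℝ) (γ : ℝ) (Φ : Matrix ι κ ℝ) (R : ι → ℝ)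

/-- The paper's `G`: `projBellman θ` minimizes `θ'' ↦ ‖R + γPΦθ - Φθ''‖_D`. -/
noncomputable def projBellman (θ : κ → ℝ) : κ → ℝ :=
  (Φᵀ * diagonal d * Φ)⁻¹ *ᵥ ((Φᵀ * diagonal d) *ᵥ (R + γ • P *ᵥ Φ *ᵥ θ))

noncomputable def projBellmanLin : Matrix κ κ ℝ := γ • (projCoef d Φ * P * Φ)

lemma projBellman_eq (θ : κ → ℝ) :
    projBellman P d γ Φ R θ = projCoef d Φ *ᵥ R + projBellmanLin P d γ Φ *ᵥ θ := by
  simp only [projBellman, projBellmanLin, projCoef, mulVec_add, mulVec_smul, smul_mulVec,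
    mulVec_mulVec, Matrix.mul_assoc]

lemma projBellman_sub (θ θ' : κ → ℝ) :
    projBellman P d γ Φ R θ - projBellman P d γ Φ R θ' =
      projBellmanLin P d γ Φ *ᵥ (θ - θ') := by
  rw [projBellman_eq, projBellman_eq, add_sub_add_left_eq_sub, mulVec_sub]

lemma weightedSqNorm_mulVec_projBellmanLin_le (hP : P ∈ rowStochastic ℝ ι)
    (hd : ∀ s, 0 ≤ d s) (hstat : vecMul d P = d) (hM : IsUnit (Φᵀ * diagonal d * Φ).det)
    (v : κ → ℝ) :
    weightedSqNorm d (Φ *ᵥ projBellmanLin P d γ Φ *ᵥ v) ≤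
      γ ^ 2 * weightedSqNorm d (Φ *ᵥ v) := by
  rw [projBellmanLin, smul_mulVec, mulVec_smul, weightedSqNorm_smul, ← mulVec_mulVec,
    ← mulVec_mulVec]
  gcongr
  exact (weightedSqNorm_mulVec_projCoef_le d Φ hd hM _).trans
    (weightedSqNorm_mulVec_le_of_stationary hP hd hstat _)

lemma gram_mul_projBellmanLin (hM : IsUnit (Φᵀ * diagonal d * Φ).det) :
    Φᵀ * diagonal d * Φ * projBellmanLin P d γ Φ =
      Φᵀ * diagonal d * (γ • P - 1) * Φ + Φᵀ * diagonal d * Φ := by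
  rw [projBellmanLin, Matrix.mul_smul, ← Matrix.mul_assoc, ← Matrix.mul_assoc,
    gram_mul_projCoef d Φ hM]
  simp only [Matrix.mul_sub, Matrix.sub_mul, Matrix.mul_smul, Matrix.smul_mul, Matrix.mul_one]
  abel

/-- A kernel vector of `ΦᵀD(γP - I)Φ` is fixed by the linear part of `G`, which is a
`γ`-contraction for `‖Φ ·‖_D`; so it is `0`. -/
lemma isUnit_det_bellmanMatrix (hP : P ∈ rowStochastic ℝ ι) (hd : ∀ s, 0 < d s)
    (hstat : vecMul d P = d) (hΦ : Function.Injective Φ.mulVec) (hγ : γ ^ 2 < 1) :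
    IsUnit (Φᵀ * diagonal d * (γ • P - 1) * Φ).det := by
  have hM := posDef_gram d Φ hd hΦ
  have hMu : IsUnit (Φᵀ * diagonal d * Φ).det := hM.det_pos.ne'.isUnit
  rw [← isUnit_iff_isUnit_det, ← mulVec_injective_iff_isUnit]
  intro v w hvw
  have hker : (Φᵀ * diagonal d * (γ • P - 1) * Φ) *ᵥ (v - w) = 0 := by
    rw [mulVec_sub, hvw, sub_self]
  have hfix : projBellmanLin P d γ Φ *ᵥ (v - w) = v - w := by
    refine mulVec_injective_iff_isUnit.2 hM.isUnit ?_
    rw [mulVec_mulVec, gram_mul_projBellmanLin P d γ Φ hMu, add_mulVec, hker, zero_add]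
  have hcontr := weightedSqNorm_mulVec_projBellmanLin_le P d γ Φ hP (fun s => (hd s).le) hstat
    hMu (v - w)
  rw [hfix] at hcontr
  by_contra hne
  have hpos := hM.dotProduct_mulVec_pos (sub_ne_zero.2 hne)
  rw [star_trivial, dotProduct_gram_mulVec] at hpos
  nlinarith

lemma projBellman_fixedPoint (hM : IsUnit (Φᵀ * diagonal d * Φ).det)
    (hA : IsUnit (Φᵀ * diagonal d * (γ • P - 1) * Φ).det) :
    projBellman P d γ Φ R (-((Φᵀ * diagonal d * (γ • P - 1) * Φ)⁻¹ *ᵥ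
        ((Φᵀ * diagonal d) *ᵥ R))) =
      -((Φᵀ * diagonal d * (γ • P - 1) * Φ)⁻¹ *ᵥ ((Φᵀ * diagonal d) *ᵥ R)) := by
  set θs := -((Φᵀ * diagonal d * (γ • P - 1) * Φ)⁻¹ *ᵥ ((Φᵀ * diagonal d) *ᵥ R))
  have hAθs : (Φᵀ * diagonal d * (γ • P - 1) * Φ) *ᵥ θs = -((Φᵀ * diagonal d) *ᵥ R) := by
    rw [mulVec_neg, mulVec_mulVec, mul_nonsing_inv _ hA, one_mulVec]
  refine mulVec_injective_iff_isUnit.2 ((isUnit_iff_isUnit_det _).2 hM) ?_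
  rw [projBellman_eq, mulVec_add, mulVec_mulVec, mulVec_mulVec, gram_mul_projCoef d Φ hM,
    gram_mul_projBellmanLin P d γ Φ hM, add_mulVec, hAθs]
  abel

lemma weightedSqNorm_sub_fixedPoint_le (hP : P ∈ rowStochastic ℝ ι) (hd : ∀ s, 0 ≤ d s)
    (hstat : vecMul d P = d) (hM : IsUnit (Φᵀ * diagonal d * Φ).det) (hγ0 : γ ≠ 0)
    (hγ1 : γ ^ 2 < 1) {θs : κ → ℝ} (hfix : projBellman P d γ Φ R θs = θs) (θ θ' : κ → ℝ) :
    weightedSqNorm d (Φ *ᵥ (θ' - θs)) ≤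
      (1 + γ ^ 2) / (1 - γ ^ 2) * weightedSqNorm d (Φ *ᵥ (θ' - projBellman P d γ Φ R θ)) +
        (1 + γ ^ 2) / 2 * weightedSqNorm d (Φ *ᵥ (θ - θs)) := by
  have hγ2 : 0 < γ ^ 2 := by positivity
  have hsplit : Φ *ᵥ (θ' - θs) = Φ *ᵥ (θ' - projBellman P d γ Φ R θ) +
      Φ *ᵥ projBellmanLin P d γ Φ *ᵥ (θ - θs) := by
    rw [← projBellman_sub P d γ Φ R, hfix, ← mulVec_add, sub_add_sub_cancel]
  have hcontr := weightedSqNorm_mulVec_projBellmanLin_le P d γ Φ hP hd hstat hM (θ - θs)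
  -- `t` is chosen so that `γ² / t = (1 + γ²) / 2`
  set t := 2 * γ ^ 2 / (1 + γ ^ 2) with ht
  have ht0 : 0 < t := by positivity
  have ht1 : t < 1 := by rw [ht, div_lt_one (by positivity)]; linarith
  rw [hsplit]
  calc _ ≤ weightedSqNorm d (Φ *ᵥ (θ' - projBellman P d γ Φ R θ)) / (1 - t) +
        weightedSqNorm d (Φ *ᵥ projBellmanLin P d γ Φ *ᵥ (θ - θs)) / t :=
        weightedSqNorm_add_le hd ht0 ht1 _ _
    _ ≤ weightedSqNorm d (Φ *ᵥ (θ' - projBellman P d γ Φ R θ)) / (1 - t) +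
        γ ^ 2 * weightedSqNorm d (Φ *ᵥ (θ - θs)) / t := by gcongr
    _ = _ := by
        rw [ht]
        field_simp
        ring

end ProjectedBellman

lemma le_add_div_of_le_mul_add {a : ℕ → ℝ} {q c : ℝ} {k : ℕ} (hq0 : 0 ≤ q) (hq1 : q < 1)
    (hc : 0 ≤ c) (ha : 0 ≤ a 0) (h : ∀ i < k, a (i + 1) ≤ q * a i + c) :
    ∀ i ≤ k, a i ≤ a 0 + c / (1 - q) := by
  have hc' : 0 ≤ c / (1 - q) := div_nonneg hc (by linarith)
  intro i hi
  induction i with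
  | zero => linarith
  | succ i ih =>
    calc a (i + 1) ≤ q * a i + c := h i hi
      _ ≤ q * (a 0 + c / (1 - q)) + c := by gcongr; exact ih (by omega)
      _ = q * a 0 + c / (1 - q) := by field_simp [(sub_pos.2 hq1).ne']; ring
      _ ≤ a 0 + c / (1 - q) := by nlinarith

section Expectation

variable {Ω : Type*} [MeasurableSpace Ω] {μ : Measure Ω}

lemma memLp_mulVec_apply {m κ : Type*} [Fintype κ] (K : Matrix m κ ℝ) {x : Ω → κ → ℝ}
    (hx : ∀ j, MemLp (fun ω => x ω j) 2 μ) (i : m) : MemLp (fun ω => (K *ᵥ x ω) i) 2 μ := by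
  simpa only [mulVec, dotProduct] using memLp_finsetSum _ fun j _ => (hx j).const_mul (K i j)

lemma integrable_weightedSqNorm {ι : Type*} [Fintype ι] (d : ι → ℝ) {x : Ω → ι → ℝ}
    (hx : ∀ s, MemLp (fun ω => x ω s) 2 μ) : Integrable (fun ω => weightedSqNorm d (x ω)) μ :=
  integrable_finsetSum _ fun s _ => (hx s).integrable_sq.const_mul (d s)

variable {ι κ : Type*} [Fintype ι] [Fintype κ] [DecidableEq ι] [DecidableEq κ]
  {P : Matrix ι ι ℝ} {d : ι → ℝ} {γ : ℝ} {Φ : Matrix ι κ ℝ} {R : ι → ℝ}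

lemma integral_weightedSqNorm_sub_fixedPoint_le [IsFiniteMeasure μ] (hP : P ∈ rowStochastic ℝ ι)
    (hd : ∀ s, 0 ≤ d s) (hstat : vecMul d P = d) (hH : (Φᵀ * diagonal d * Φ).IsHermitian)
    (hM : IsUnit (Φᵀ * diagonal d * Φ).det) (hγ0 : γ ≠ 0) (hγ1 : γ ^ 2 < 1) {θs : κ → ℝ}
    (hfix : projBellman P d γ Φ R θs = θs) {θ θ' : Ω → κ → ℝ}
    (hθ : ∀ j, MemLp (fun ω => θ ω j) 2 μ) (hθ' : ∀ j, MemLp (fun ω => θ' ω j) 2 μ) :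
    ∫ ω, weightedSqNorm d (Φ *ᵥ (θ' ω - θs)) ∂μ ≤
      (1 + γ ^ 2) / 2 * ∫ ω, weightedSqNorm d (Φ *ᵥ (θ ω - θs)) ∂μ +
        (1 + γ ^ 2) / (1 - γ ^ 2) * (⨆ i, hH.eigenvalues i) *
          ∫ ω, ∑ j, (θ' ω j - projBellman P d γ Φ R (θ ω) j) ^ 2 ∂μ := by
  have hL2 : ∀ {x : Ω → κ → ℝ}, (∀ j, MemLp (fun ω => x ω j) 2 μ) →
      Integrable (fun ω => weightedSqNorm d (Φ *ᵥ (x ω - θs))) μ := fun hx =>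
    integrable_weightedSqNorm d (memLp_mulVec_apply Φ fun j => (hx j).sub (memLp_const (θs j)))
  have hG : ∀ j, MemLp (fun ω => projBellman P d γ Φ R (θ ω) j) 2 μ := fun j => by
    simp only [projBellman_eq, Pi.add_apply]
    exact (memLp_const ((projCoef d Φ *ᵥ R) j)).add
      (memLp_mulVec_apply (projBellmanLin P d γ Φ) hθ j)
  have herr : Integrable (fun ω => ∑ j, (θ' ω j - projBellman P d γ Φ R (θ ω) j) ^ 2) μ :=
    integrable_finsetSum _ fun j _ => ((hθ' j).sub (hG j)).integrable_sq
  rw [add_comm, ← integral_const_mul, ← integral_const_mul, ← integral_add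
    (herr.const_mul _) ((hL2 hθ).const_mul _)]
  refine integral_mono (hL2 hθ') ((herr.const_mul _).add ((hL2 hθ).const_mul _)) fun ω => ?_
  have hrayleigh := hH.le_iSup_eigenvalues_mul (θ' ω - projBellman P d γ Φ R (θ ω))
  rw [dotProduct_gram_mulVec] at hrayleigh
  have hstep := weightedSqNorm_sub_fixedPoint_le P d γ Φ R hP hd hstat hM hγ0 hγ1 hfix (θ ω) (θ' ω)
  have hc : 0 ≤ (1 + γ ^ 2) / (1 - γ ^ 2) := div_nonneg (by positivity) (by linarith)
  calc _ ≤ _ := hstep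
    _ ≤ (1 + γ ^ 2) / (1 - γ ^ 2) * ((⨆ i, hH.eigenvalues i) *
          ∑ j, (θ' ω j - projBellman P d γ Φ R (θ ω) j) ^ 2) +
        (1 + γ ^ 2) / 2 * weightedSqNorm d (Φ *ᵥ (θ ω - θs)) := by gcongr; exact hrayleigh
    _ = _ := by ring

lemma iInf_eigenvalues_mul_integral_le (hH : (Φᵀ * diagonal d * Φ).IsHermitian)
    {x : Ω → κ → ℝ} (hx : ∀ j, MemLp (fun ω => x ω j) 2 μ) :
    (⨅ i, hH.eigenvalues i) * ∫ ω, ∑ j, x ω j ^ 2 ∂μ ≤ ∫ ω, weightedSqNorm d (Φ *ᵥ x ω) ∂μ := by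
  rw [← integral_const_mul]
  refine integral_mono ((integrable_finsetSum _ fun j _ => (hx j).integrable_sq).const_mul _)
    (integrable_weightedSqNorm d (memLp_mulVec_apply Φ hx)) fun ω => ?_
  simpa only [dotProduct_gram_mulVec] using hH.iInf_eigenvalues_mul_le (x ω)

lemma integral_weightedSqNorm_iterate_le [IsFiniteMeasure μ] (hP : P ∈ rowStochastic ℝ ι)
    (hd : ∀ s, 0 ≤ d s) (hstat : vecMul d P = d) (hH : (Φᵀ * diagonal d * Φ).IsHermitian)
    (hM : IsUnit (Φᵀ * diagonal d * Φ).det) (hγ0 : γ ≠ 0) (hγ1 : γ ^ 2 < 1) {θs : κ → ℝ}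
    (hfix : projBellman P d γ Φ R θs = θs) {k : ℕ} {ε : ℝ} (hε : 0 ≤ ε) {θ : ℕ → Ω → κ → ℝ}
    (hL2 : ∀ i ≤ k, ∀ j, MemLp (fun ω => θ i ω j) 2 μ)
    (hrec : ∀ i < k,
      ∫ ω, ∑ j, (θ (i + 1) ω j - projBellman P d γ Φ R (θ i ω) j) ^ 2 ∂μ ≤ ε) :
    ∀ i ≤ k, ∫ ω, weightedSqNorm d (Φ *ᵥ (θ i ω - θs)) ∂μ ≤
      ∫ ω, weightedSqNorm d (Φ *ᵥ (θ 0 ω - θs)) ∂μ +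
        2 * (1 + γ ^ 2) * (⨆ i, hH.eigenvalues i) / (1 - γ ^ 2) ^ 2 * ε := by
  have hlmax : 0 ≤ ⨆ i, hH.eigenvalues i :=
    Real.iSup_nonneg fun i => (posSemidef_gram d Φ hd).eigenvalues_nonneg i
  have hc : 0 ≤ (1 + γ ^ 2) / (1 - γ ^ 2) * (⨆ i, hH.eigenvalues i) :=
    mul_nonneg (div_nonneg (by positivity) (by linarith)) hlmax
  have hconst : (1 + γ ^ 2) / (1 - γ ^ 2) * (⨆ i, hH.eigenvalues i) * ε /
      (1 - (1 + γ ^ 2) / 2) = 2 * (1 + γ ^ 2) * (⨆ i, hH.eigenvalues i) / (1 - γ ^ 2) ^ 2 * ε := by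
    have h1 : 1 - (1 + γ ^ 2) / 2 = (1 - γ ^ 2) / 2 := by ring
    have h2 : 1 - γ ^ 2 ≠ 0 := by linarith
    rw [h1]
    field_simp
  rw [← hconst]
  refine le_add_div_of_le_mul_add (by positivity) (by linarith) (mul_nonneg hc hε)
    (integral_nonneg fun ω => weightedSqNorm_nonneg hd _) fun i hi => ?_
  refine (integral_weightedSqNorm_sub_fixedPoint_le hP hd hstat hH hM hγ0 hγ1 hfix
    (hL2 i hi.le) (hL2 (i + 1) hi)).trans ?_
  gcongr
  exact hrec i hi

end Expectation

end PeriodicTD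

open PeriodicTD

theorem periodic_TD_iterates_bounded_second_moment_general
    (N n : ℕ) (hn : 0 < n)
    (P : Matrix (Fin N) (Fin N) ℝ) (d : Fin N → ℝ) (γ : ℝ)
    (Φ : Matrix (Fin N) (Fin n) ℝ) (R : Fin N → ℝ)
    (hPnonneg : ∀ i j, 0 ≤ P i j)
    (hProw : ∀ i, ∑ j, P i j = 1)
    (hdpos : ∀ s, 0 < d s)
    (hstat : Matrix.vecMul d P = d)
    (hγ0 : 0 < γ) (hγ1 : γ < 1)
    (hΦ : Φ.rank = n)
    (hHerm : (Φᵀ * Matrix.diagonal d * Φ).IsHermitian)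
    {Ω : Type*} [MeasurableSpace Ω] (Pr : Measure Ω) [IsProbabilityMeasure Pr]
    (k : ℕ)
    (ε : ℝ) (hε : 0 ≤ ε)
    (θ : ℕ → Ω → Fin n → ℝ)
    (hL2 : ∀ i ≤ k, ∀ j, MemLp (fun ω => θ i ω j) 2 Pr)
    (hrec : ∀ i < k,
      (∫ ω, (∑ j, (θ (i + 1) ω j -
        ((Φᵀ * Matrix.diagonal d * Φ)⁻¹.mulVec
          ((Φᵀ * Matrix.diagonal d).mulVec
            (R + γ • P.mulVec (Φ.mulVec (θ i ω))))) j) ^ 2) ∂Pr) ≤ ε) :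
    let D : Matrix (Fin N) (Fin N) ℝ := Matrix.diagonal d
    let sqD : (Fin N → ℝ) → ℝ := fun v => v ⬝ᵥ D.mulVec v
    let θstar : Fin n → ℝ :=
      -((Φᵀ * D * (γ • P - 1) * Φ)⁻¹.mulVec ((Φᵀ * D).mulVec R))
    let lammax : ℝ := ⨆ i, hHerm.eigenvalues i
    let lammin : ℝ := ⨅ i, hHerm.eigenvalues i
    let ω₁ : ℝ := 2 * (1 + γ ^ 2) * lammax / ((1 - γ ^ 2) ^ 2 * lammin)
    let ω₂ : ℝ := (∫ ω, sqD (Φ.mulVec (θ 0 ω) - Φ.mulVec θstar) ∂Pr) / lammin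
    ∀ i ≤ k, (∫ ω, (∑ j, (θ i ω j - θstar j) ^ 2) ∂Pr) ≤ ω₁ * ε + ω₂ := by
  intro D sqD θstar lammax lammin ω₁ ω₂ i hi
  have hP : P ∈ rowStochastic ℝ (Fin N) := mem_rowStochastic_iff_sum.2 ⟨hPnonneg, hProw⟩
  have hd : ∀ s, 0 ≤ d s := fun s => (hdpos s).le
  have hΦinj : Function.Injective Φ.mulVec := mulVec_injective_of_rank_eq_card (by simpa using hΦ)
  have hM := posDef_gram d Φ hdpos hΦinj
  have hMu : IsUnit (Φᵀ * diagonal d * Φ).det := hM.det_pos.ne'.isUnit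
  have hγ2 : γ ^ 2 < 1 := by nlinarith
  have hfix : projBellman P d γ Φ R θstar = θstar := projBellman_fixedPoint P d γ Φ R hMu
    (isUnit_det_bellmanMatrix P d γ Φ hP hdpos hstat hΦinj hγ2)
  have hbound := integral_weightedSqNorm_iterate_le hP hd hstat hHerm hMu hγ0.ne' hγ2 hfix hε
    hL2 hrec i hi
  have hlow : lammin * ∫ ω, ∑ j, (θ i ω j - θstar j) ^ 2 ∂Pr ≤
      ∫ ω, weightedSqNorm d (Φ *ᵥ (θ i ω - θstar)) ∂Pr :=
    iInf_eigenvalues_mul_integral_le hHerm fun j => (hL2 i hi j).sub (memLp_const (θstar j))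
  have he0 : ∫ ω, sqD (Φ *ᵥ θ 0 ω - Φ *ᵥ θstar) ∂Pr =
      ∫ ω, weightedSqNorm d (Φ *ᵥ (θ 0 ω - θstar)) ∂Pr :=
    integral_congr_ae (ae_of_all _ fun ω => by
      simp only [sqD, D, ← mulVec_sub, dotProduct_diagonal_mulVec_self])
  have : Nonempty (Fin n) := ⟨⟨0, hn⟩⟩
  have hlmin : 0 < lammin := hM.iInf_eigenvalues_pos
  calc ∫ ω, ∑ j, (θ i ω j - θstar j) ^ 2 ∂Pr ≤
      (∫ ω, weightedSqNorm d (Φ *ᵥ (θ i ω - θstar)) ∂Pr) / lammin := by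
        rw [le_div_iff₀ hlmin]; linarith
    _ ≤ (∫ ω, weightedSqNorm d (Φ *ᵥ (θ 0 ω - θstar)) ∂Pr +
          2 * (1 + γ ^ 2) * lammax / (1 - γ ^ 2) ^ 2 * ε) / lammin := by gcongr
    _ = ω₁ * ε + ω₂ := by
        simp only [ω₁, ω₂, he0]
        field_simp
        ring

/-- If the square-integrable random vectors `θ_0, …, θ_k` satisfy
`𝔼[‖θ_{i+1} − G(θ_i)‖₂²] ≤ ε` for `i = 0,…,k−1`, where
`G(θ) := (ΦᵀDΦ)⁻¹ΦᵀD(R + γPΦθ)`, then for every `0 ≤ i ≤ k`,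
`𝔼[‖θ_i − θ*‖₂²] ≤ ω₁ε + ω₂`, where
`ω₁ := 2(1+γ²)λ_max(ΦᵀDΦ)/((1−γ²)² λ_min(ΦᵀDΦ))`,
`ω₂ := 𝔼[‖Φθ_0 − Φθ*‖_D²]/λ_min(ΦᵀDΦ)`, and
`θ* := −(ΦᵀD(γP − I)Φ)⁻¹ΦᵀDR`. -/
theorem periodic_TD_iterates_bounded_second_moment
    (N n : ℕ) (hN : 0 < N) (hn : 0 < n) (hnN : n ≤ N)
    (P : Matrix (Fin N) (Fin N) ℝ) (d : Fin N → ℝ) (γ : ℝ)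
    (Φ : Matrix (Fin N) (Fin n) ℝ) (R : Fin N → ℝ)
    (hPnonneg : ∀ i j, 0 ≤ P i j)
    (hProw : ∀ i, ∑ j, P i j = 1)
    (hdpos : ∀ s, 0 < d s)
    (hdsum : ∑ s, d s = 1)
    (hstat : Matrix.vecMul d P = d)
    (hγ0 : 0 < γ) (hγ1 : γ < 1)
    (hΦ : Φ.rank = n)
    (hHerm : (Φᵀ * Matrix.diagonal d * Φ).IsHermitian)
    {Ω : Type*} [MeasurableSpace Ω] (Pr : Measure Ω) [IsProbabilityMeasure Pr]
    (k : ℕ) (hk : 0 < k)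
    (ε : ℝ) (hε : 0 ≤ ε)
    (θ : ℕ → Ω → Fin n → ℝ)
    (hL2 : ∀ i ≤ k, ∀ j, MemLp (fun ω => θ i ω j) 2 Pr)
    (hrec : ∀ i < k,
      (∫ ω, (∑ j, (θ (i + 1) ω j -
        ((Φᵀ * Matrix.diagonal d * Φ)⁻¹.mulVec
          ((Φᵀ * Matrix.diagonal d).mulVec
            (R + γ • P.mulVec (Φ.mulVec (θ i ω))))) j) ^ 2) ∂Pr) ≤ ε) :
    let D : Matrix (Fin N) (Fin N) ℝ := Matrix.diagonal d
    let sqD : (Fin N → ℝ) → ℝ := fun v => v ⬝ᵥ D.mulVec v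
    let θstar : Fin n → ℝ :=
      -((Φᵀ * D * (γ • P - 1) * Φ)⁻¹.mulVec ((Φᵀ * D).mulVec R))
    let lammax : ℝ := ⨆ i, hHerm.eigenvalues i
    let lammin : ℝ := ⨅ i, hHerm.eigenvalues i
    let ω₁ : ℝ := 2 * (1 + γ ^ 2) * lammax / ((1 - γ ^ 2) ^ 2 * lammin)
    let ω₂ : ℝ := (∫ ω, sqD (Φ.mulVec (θ 0 ω) - Φ.mulVec θstar) ∂Pr) / lammin
    ∀ i ≤ k, (∫ ω, (∑ j, (θ i ω j - θstar j) ^ 2) ∂Pr) ≤ ω₁ * ε + ω₂ :=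
  periodic_TD_iterates_bounded_second_moment_general N n hn P d γ Φ R hPnonneg hProw hdpos hstat hγ0
    hγ1 hΦ hHerm Pr k ε hε θ hL2 hrec
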